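/- For all integers k ≥ 1 and n ≥ 1: every skew Dyck path containing exactly n occurrences of the factor U D^k L has semilength at least (k+2)n − 1, and there exists a skew Dyck path of semilength exactly (k+2)n − 1 containing exactly n occurrences of the factor U D^k L. -/

import Mathlib

/-- The step alphabet for skew Dyck paths: up, down, left. -/
inductive Step : Type
  | U | D | L
  deriving DecidableEq

/-- Number of U steps in a word. -/
def countU (w : List Step) : ℕ := w.count Step.U
/-- Number of D steps in a word. -/
def countD (w : List Step) : ℕ := w.count Step.D
/-- Number of L steps in a word. -/
def countL (w : List Step) : ℕ := w.count Step.L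

/-- A skew Dyck path: every prefix has at least as many U's as D's and L's combined,
the totals balance, and there is no factor `UL` or `LU`. -/
def IsSkewDyck (w : List Step) : Prop :=
  (∀ p, p <+: w → countD p + countL p ≤ countU p) ∧
  countU w = countD w + countL w ∧
  ¬ [Step.U, Step.L] <:+: w ∧ ¬ [Step.L, Step.U] <:+: w

/-- The semilength of a skew Dyck path is its number of U's. -/
def semilength (w : List Step) : ℕ := countU w

/-- The factor `U D^k L`. -/
def boxFactor (k : ℕ) : List Step := Step.U :: (List.replicate k Step.D ++ [Step.L])

/-- The number of occurrences (starting positions) of `f` as a factor (contiguous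
subword) of `w`. -/
def numOccurrences (f w : List Step) : ℕ :=
  ((Finset.range (w.length + 1)).filter (fun i => f <+: w.drop i)).card

/-- A `k`-box path of size `n`: a skew Dyck path of semilength `(k+2)n - 1` with
exactly `n` occurrences of the factor `U D^k L`. -/
def IsBoxPath (k n : ℕ) (w : List Step) : Prop :=
  IsSkewDyck w ∧ semilength w = (k+2)*n - 1 ∧ numOccurrences (boxFactor k) w = n

/-- Number of returns: positions `i` such that the `(i+1)`-st letter is a `D` or `L`
and the prefix of length `i+1` is balanced (the path returns to the x-axis). -/
def numReturns (w : List Step) : ℕ :=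
  ((Finset.range w.length).filter (fun i =>
    (w[i]? = some Step.D ∨ w[i]? = some Step.L) ∧
    countU (w.take (i+1)) = countD (w.take (i+1)) + countL (w.take (i+1)))).card

/-- Number of long ascents: maximal runs of consecutive U's of length at least 2,
counted via their starting positions. -/
def numLongAscents (w : List Step) : ℕ :=
  ((Finset.range w.length).filter (fun i =>
    w[i]? = some Step.U ∧ w[i+1]? = some Step.U ∧
    (i = 0 ∨ w[i-1]? ≠ some Step.U))).card

/-- The word `U^{a_1} D^k L D U^{a_2} D^k L D ⋯ U^{a_{n-1}} D^k L D U^{a_n} D^k L`. -/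
def boxForm (k : ℕ) : List ℕ → List Step
  | [] => []
  | [a] => List.replicate a Step.U ++ List.replicate k Step.D ++ [Step.L]
  | a :: b :: rest =>
      List.replicate a Step.U ++ List.replicate k Step.D ++ [Step.L, Step.D] ++
        boxForm k (b :: rest)

/-- A block `U^b D^{k-1} L D` of an augmented `k`-Dyck path. -/
def augBlock (k b : ℕ) : List Step :=
  List.replicate b Step.U ++ List.replicate (k-1) Step.D ++ [Step.L, Step.D]

/-- The word `U^{b_1} D^{k-1} L D ⋯ U^{b_m} D^{k-1} L D`. -/
def augForm (k : ℕ) (b : List ℕ) : List Step := (b.map (augBlock k)).flatten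

/-- An augmented `k`-Dyck path: a skew Dyck path of the form
`U^{b_1} D^{k-1} L D ⋯ U^{b_m} D^{k-1} L D` with all `b_i` positive. -/
def IsAugmented (k : ℕ) (w : List Step) : Prop :=
  IsSkewDyck w ∧ ∃ b : List ℕ, (∀ x ∈ b, 0 < x) ∧ w = augForm k b

/-- An augmented `k`-Dyck path of size `m`. -/
def IsAugmentedOfSize (k m : ℕ) (w : List Step) : Prop :=
  IsSkewDyck w ∧ ∃ b : List ℕ, b.length = m ∧ (∀ x ∈ b, 0 < x) ∧ w = augForm k b

/-- A tailed `k`-box path ends with the factor `U^{k+1} D^k L`. -/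
def Tailed (k : ℕ) (w : List Step) : Prop :=
  (List.replicate (k+1) Step.U ++ List.replicate k Step.D ++ [Step.L]) <:+ w

/-!
Each occurrence of `U D^k L` contributes `k + 1` down-type steps (`D` or `L`), and since `LU` is
forbidden, the step right after it, if there is one, is another down-type step. These blocks of
`k + 2` steps are disjoint for distinct occurrences and at most one of them is cut short by the end
of the path; as a skew Dyck path has as many down-type steps as `U`'s, its semilength is at least
`(k + 2) n - 1`. Equality holds for `(U^{k+2} D^k L D)^{n-1} U^{k+1} D^k L`.
-/

open List

theorem List.prefix_append_or {α : Type*} {p u v : List α} (h : p <+: u ++ v) :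
    p <+: u ∨ ∃ q, q <+: v ∧ p = u ++ q := by
  induction u generalizing p with
  | nil => exact Or.inr ⟨p, h, rfl⟩
  | cons a u ih =>
    rcases prefix_cons_iff.1 h with rfl | ⟨t, rfl, ht⟩
    · exact Or.inl nil_prefix
    · rcases ih ht with ht | ⟨q, hq, rfl⟩
      · exact Or.inl (cons_prefix_cons.2 ⟨rfl, ht⟩)
      · exact Or.inr ⟨q, hq, rfl⟩

theorem countU_add_countD_add_countL (w : List Step) :
    countU w + countD w + countL w = w.length := by
  induction w with
  | nil => rfl
  | cons a w ih => cases a <;> simp [countU, countD, countL] at ih ⊢ <;> omega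

theorem numOccurrences_nil {f : List Step} (hf : f ≠ []) : numOccurrences f [] = 0 := by
  simp [numOccurrences, hf]

theorem numOccurrences_cons (f : List Step) (a : Step) (w : List Step) :
    numOccurrences f (a :: w) = numOccurrences f w + if f <+: a :: w then 1 else 0 := by
  simp only [numOccurrences, Finset.card_filter, length_cons,
    Finset.sum_range_succ' _ (w.length + 1), drop_succ_cons, drop_zero]

theorem boxFactor_ne_nil (k : ℕ) : boxFactor k ≠ [] := cons_ne_nil _ _

theorem numOccurrences_boxFactor_cons_of_ne {k : ℕ} {a : Step} (ha : a ≠ Step.U)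
    (w : List Step) :
    numOccurrences (boxFactor k) (a :: w) = numOccurrences (boxFactor k) w := by
  rw [numOccurrences_cons, if_neg]
  · rfl
  · simp [boxFactor, Ne.symm ha]

theorem numOccurrences_boxFactor_append_of_U_notMem {k : ℕ} {u : List Step} (hu : Step.U ∉ u)
    (w : List Step) :
    numOccurrences (boxFactor k) (u ++ w) = numOccurrences (boxFactor k) w := by
  induction u with
  | nil => rfl
  | cons a u ih =>
    rw [mem_cons, not_or] at hu
    rw [cons_append, numOccurrences_boxFactor_cons_of_ne (Ne.symm hu.1), ih hu.2]

theorem numOccurrences_boxFactor_append {k : ℕ} (v : List Step) :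
    numOccurrences (boxFactor k) (boxFactor k ++ v) = numOccurrences (boxFactor k) v + 1 := by
  have hsplit : boxFactor k ++ v = Step.U :: (replicate k Step.D ++ [Step.L] ++ v) := rfl
  rw [hsplit, numOccurrences_cons, if_pos (hsplit ▸ prefix_append _ _),
    numOccurrences_boxFactor_append_of_U_notMem (by simp [mem_replicate])]

theorem numOccurrences_boxFactor_U_cons {k : ℕ} (hk : 1 ≤ k) {w : List Step}
    (hw : w.head? = some Step.U) :
    numOccurrences (boxFactor k) (Step.U :: w) = numOccurrences (boxFactor k) w := by
  obtain ⟨k, rfl⟩ := Nat.exists_eq_add_of_le' hk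
  obtain ⟨w, rfl⟩ : ∃ t, w = Step.U :: t := by
    cases w with
    | nil => simp at hw
    | cons a t => exact ⟨t, by simpa using hw⟩
  rw [numOccurrences_cons, if_neg (by simp [boxFactor, replicate_succ]), add_zero]

theorem numOccurrences_replicate_U_append_boxFactor_append {k : ℕ} (hk : 1 ≤ k) (j : ℕ)
    (v : List Step) :
    numOccurrences (boxFactor k) (replicate j Step.U ++ boxFactor k ++ v)
      = numOccurrences (boxFactor k) v + 1 := by
  induction j with
  | zero => exact numOccurrences_boxFactor_append v
  | succ j ih =>
    rw [replicate_succ, cons_append, cons_append,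
      numOccurrences_boxFactor_U_cons hk (by cases j <;> simp [boxFactor, replicate_succ]), ih]

theorem add_two_mul_numOccurrences_boxFactor_le (k : ℕ) (w : List Step)
    (hw : ¬ [Step.L, Step.U] <:+: w) :
    (k + 2) * numOccurrences (boxFactor k) w ≤ countD w + countL w + 1 := by
  by_cases hbox : boxFactor k <+: w
  · obtain ⟨r, rfl⟩ := hbox
    have hcount : countD (boxFactor k ++ r) + countL (boxFactor k ++ r)
        = k + 1 + (countD r + countL r) := by
      simp [boxFactor, countD, countL, count_replicate]; omega
    rw [numOccurrences_boxFactor_append, hcount]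
    match hr : r with
    | [] => simp [numOccurrences_nil (boxFactor_ne_nil k), countD, countL]
    | b :: r =>
      -- since `LU` is forbidden, the step after the `L` is one more down step
      have hb : b ≠ Step.U := by
        rintro rfl
        exact hw ⟨Step.U :: replicate k Step.D, r, by simp [boxFactor]⟩
      have hcount_b : countD (b :: r) + countL (b :: r) = countD r + countL r + 1 := by
        cases b <;> simp [countD, countL] at hb ⊢ <;> omega
      have ih := add_two_mul_numOccurrences_boxFactor_le k r
        (fun h => hw (h.trans ((suffix_cons b r).trans (suffix_append _ _)).isInfix))
      rw [numOccurrences_boxFactor_cons_of_ne hb, hcount_b]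
      linarith
  · match hw_eq : w with
    | [] => simp [numOccurrences_nil (boxFactor_ne_nil k)]
    | a :: w =>
      have ih := add_two_mul_numOccurrences_boxFactor_le k w
        (fun h => hw (h.trans (suffix_cons a w).isInfix))
      have hD : countD w ≤ countD (a :: w) := (sublist_cons_self a w).count_le _
      have hL : countL w ≤ countL (a :: w) := (sublist_cons_self a w).count_le _
      rw [numOccurrences_cons, if_neg hbox, add_zero]
      linarith
termination_by w.length
decreasing_by all_goals subst_vars; simp [boxFactor] <;> omega

def NeverBelowAxis (w : List Step) : Prop :=
  ∀ p, p <+: w → countD p + countL p ≤ countU p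

def Step.Compatible (a b : Step) : Prop :=
  [a, b] ≠ [Step.U, Step.L] ∧ [a, b] ≠ [Step.L, Step.U]

theorem Step.compatible_D_left (b : Step) : Step.Compatible Step.D b := by simp [Step.Compatible]

theorem isChain_compatible_iff (w : List Step) :
    IsChain Step.Compatible w ↔ ¬ [Step.U, Step.L] <:+: w ∧ ¬ [Step.L, Step.U] <:+: w := by
  constructor
  · intro h
    constructor <;> intro hinf <;> simpa [Step.Compatible] using isChain_pair.1 (h.infix hinf)
  · rintro ⟨hUL, hLU⟩
    refine isChain_iff_forall_rel_of_append_cons_cons.2 fun a b l₁ l₂ hw => ⟨?_, ?_⟩ <;>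
      intro hab
    · exact hUL ⟨l₁, l₂, by simp [hw, ← hab]⟩
    · exact hLU ⟨l₁, l₂, by simp [hw, ← hab]⟩

theorem isSkewDyck_iff (w : List Step) :
    IsSkewDyck w ↔
      NeverBelowAxis w ∧ countU w = countD w + countL w ∧ IsChain Step.Compatible w := by
  rw [isChain_compatible_iff]
  rfl

theorem NeverBelowAxis.append {u v : List Step} (hu : NeverBelowAxis u)
    (hbal : countU u = countD u + countL u) (hv : NeverBelowAxis v) :
    NeverBelowAxis (u ++ v) := by
  intro p hp
  rcases prefix_append_or hp with hp | ⟨q, hq, rfl⟩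
  · exact hu p hp
  · have := hv q hq
    simp only [countU, countD, countL, count_append] at hbal this ⊢
    omega

theorem neverBelowAxis_replicate_U_append {a : ℕ} {d : List Step} (hd : Step.U ∉ d)
    (hlen : d.length ≤ a) : NeverBelowAxis (replicate a Step.U ++ d) := by
  intro p hp
  rcases prefix_append_or hp with hp | ⟨q, hq, rfl⟩
  · rw [(prefix_replicate_iff.1 hp).2]
    simp [countU, countD, countL, count_replicate]
  · have hqU : countU q = 0 := count_eq_zero.2 fun h => hd (hq.subset h)
    have hq_len := countU_add_countD_add_countL q
    have := hq.length_le
    simp [countU, countD, countL, count_append, count_replicate] at hqU hq_len ⊢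
    omega

theorem IsSkewDyck.append {u v : List Step} (hu : IsSkewDyck u) (hv : IsSkewDyck v)
    (hlast : u.getLast? = some Step.D) : IsSkewDyck (u ++ v) := by
  rw [isSkewDyck_iff] at *
  obtain ⟨hu_nb, hu_bal, hu_chain⟩ := hu
  obtain ⟨hv_nb, hv_bal, hv_chain⟩ := hv
  refine ⟨hu_nb.append hu_bal hv_nb, ?_, isChain_append.2 ⟨hu_chain, hv_chain, ?_⟩⟩
  · simp only [countU, countD, countL, count_append] at *
    omega
  · simp [hlast, Step.compatible_D_left]

theorem isSkewDyck_replicate_U_append_boxFactor {k : ℕ} (hk : 1 ≤ k) (c : ℕ) :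
    IsSkewDyck (replicate (k + c) Step.U ++ boxFactor k ++ replicate c Step.D) := by
  have hw : replicate (k + c) Step.U ++ boxFactor k ++ replicate c Step.D
      = replicate (k + c + 1) Step.U ++ replicate k Step.D ++ Step.L :: replicate c Step.D := by
    simp [boxFactor, replicate_succ']
  have hUU : Step.Compatible Step.U Step.U := by simp [Step.Compatible]
  rw [hw, isSkewDyck_iff]
  refine ⟨?_, ?_, ?_⟩
  · rw [append_assoc]
    exact neverBelowAxis_replicate_U_append (by simp [mem_replicate]) (by simp; omega)
  · simp [countU, countD, countL, count_replicate]
  · simp [isChain_append, isChain_replicate_of_rel _ hUU,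
      isChain_replicate_of_rel _ (Step.compatible_D_left _), isChain_cons, Step.Compatible,
      head?_replicate, getLast?_replicate, Nat.one_le_iff_ne_zero.1 hk]

def minimalBoxPath (k : ℕ) : ℕ → List Step
  | 0 => replicate k Step.U ++ boxFactor k
  | m + 1 => replicate (k + 1) Step.U ++ boxFactor k ++ Step.D :: minimalBoxPath k m

theorem isSkewDyck_minimalBoxPath {k : ℕ} (hk : 1 ≤ k) (m : ℕ) :
    IsSkewDyck (minimalBoxPath k m) := by
  induction m with
  | zero => simpa [minimalBoxPath] using isSkewDyck_replicate_U_append_boxFactor hk 0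
  | succ m ih =>
    have hsplit : minimalBoxPath k (m + 1)
        = (replicate (k + 1) Step.U ++ boxFactor k ++ [Step.D]) ++ minimalBoxPath k m := by
      simp [minimalBoxPath]
    rw [hsplit]
    exact (isSkewDyck_replicate_U_append_boxFactor hk 1).append ih (by simp)

theorem semilength_minimalBoxPath (k m : ℕ) :
    semilength (minimalBoxPath k m) = (k + 2) * m + k + 1 := by
  induction m with
  | zero => simp [minimalBoxPath, semilength, countU, boxFactor, count_replicate]
  | succ m ih =>
    simp only [semilength, countU] at ih ⊢
    simp [minimalBoxPath, boxFactor, count_replicate, ih]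
    ring

theorem numOccurrences_minimalBoxPath {k : ℕ} (hk : 1 ≤ k) (m : ℕ) :
    numOccurrences (boxFactor k) (minimalBoxPath k m) = m + 1 := by
  induction m with
  | zero =>
    simpa [minimalBoxPath, numOccurrences_nil (boxFactor_ne_nil k)]
      using numOccurrences_replicate_U_append_boxFactor_append hk k []
  | succ m ih =>
    rw [minimalBoxPath, numOccurrences_replicate_U_append_boxFactor_append hk,
      numOccurrences_boxFactor_cons_of_ne (by simp), ih]

/-- Among skew Dyck paths with exactly `n` occurrences of the factor `U D^k L`,
the minimum possible semilength is `(k+2)n - 1`. -/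
theorem statement0 (k n : ℕ) (hk : 1 ≤ k) (hn : 1 ≤ n) :
    (∀ w : List Step, IsSkewDyck w → numOccurrences (boxFactor k) w = n →
      (k+2)*n - 1 ≤ semilength w) ∧
    (∃ w : List Step, IsSkewDyck w ∧ semilength w = (k+2)*n - 1 ∧
      numOccurrences (boxFactor k) w = n) := by
  refine ⟨fun w hw hocc => ?_, ?_⟩
  · obtain ⟨-, hbal, -, hLU⟩ := hw
    have hbound := add_two_mul_numOccurrences_boxFactor_le k w hLU
    rw [hocc, ← hbal] at hbound
    exact Nat.sub_le_of_le_add hbound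
  · obtain ⟨m, rfl⟩ := Nat.exists_eq_add_of_le' hn
    refine ⟨minimalBoxPath k m, isSkewDyck_minimalBoxPath hk m, ?_,
      numOccurrences_minimalBoxPath hk m⟩
    rw [semilength_minimalBoxPath, mul_add_one]
    omega
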